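/- For every s ∈ S_k^p, the inner minimization over U attains its minimum in closed form, and consequently the regularized interpretable matrix completion problem min over U ∈ ℝ^{n×p} and s ∈ S_k^p of (1/(nm))(Σ_{(i,j)∈Ω}(X_{ij}−A_{ij})² + (1/γ)‖U‖_F²) subject to X = U·diag(s)·Bᵀ is equal to min_{s ∈ S_k^p} c(s), where c(s) = (1/(nm)) Σ_{i=1}^n ā_i (I_m + γ W_i (Σ_{j=1}^p s_j K_j) W_i)⁻¹ ā_iᵀ. Moreover c is a convex function of s. -/

import Mathlib

open Matrix BigOperators

/-- `S_k^p`: binary vectors in `{0,1}^p` with exactly `k` ones. -/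
def SkpSet (p k : ℕ) : Set (Fin p → ℝ) :=
  {s | (∀ j, s j = 0 ∨ s j = 1) ∧ ∑ j, s j = (k : ℝ)}

/-- Diagonal 0/1 matrix `W_i` of the observed entries of row `i`. -/
noncomputable def Wmat {n m : ℕ} (Om : Finset (Fin n × Fin m)) (i : Fin n) :
    Matrix (Fin m) (Fin m) ℝ :=
  Matrix.diagonal (fun j => if (i, j) ∈ Om then (1 : ℝ) else 0)

/-- `ā_i`: the `i`-th row of `A` with unobserved entries set to `0`. -/
noncomputable def abar {n m : ℕ} (Om : Finset (Fin n × Fin m))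
    (A : Matrix (Fin n) (Fin m) ℝ) (i : Fin n) : Fin m → ℝ :=
  fun j => if (i, j) ∈ Om then A i j else 0

/-- `K_j = b^j (b^j)ᵀ`, the outer product of the `j`-th column of `B`. -/
noncomputable def Kmat {m p : ℕ} (B : Matrix (Fin m) (Fin p) ℝ) (j : Fin p) :
    Matrix (Fin m) (Fin m) ℝ :=
  Matrix.vecMulVec (fun r => B r j) (fun r => B r j)

/-- `c(s) = (1/(nm)) Σ_i ā_i (I_m + γ W_i (Σ_j s_j K_j) W_i)⁻¹ ā_iᵀ`. -/
noncomputable def cfun {n m p : ℕ} (γ : ℝ) (Om : Finset (Fin n × Fin m))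
    (A : Matrix (Fin n) (Fin m) ℝ) (B : Matrix (Fin m) (Fin p) ℝ)
    (s : Fin p → ℝ) : ℝ :=
  (1 / ((n : ℝ) * (m : ℝ))) * ∑ i : Fin n,
    abar Om A i ⬝ᵥ
      (((1 : Matrix (Fin m) (Fin m) ℝ) +
          γ • (Wmat Om i * (∑ j : Fin p, s j • Kmat B j) * Wmat Om i))⁻¹ *ᵥ abar Om A i)

/-- The regularized interpretable matrix completion objective
`(1/(nm)) (Σ_{(i,j)∈Ω} (X_{ij}-A_{ij})² + (1/γ)‖U‖_F²)` with `X = U diag(s) Bᵀ`. -/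
noncomputable def objFun {n m p : ℕ} (γ : ℝ) (Om : Finset (Fin n × Fin m))
    (A : Matrix (Fin n) (Fin m) ℝ) (B : Matrix (Fin m) (Fin p) ℝ)
    (U : Matrix (Fin n) (Fin p) ℝ) (s : Fin p → ℝ) : ℝ :=
  (1 / ((n : ℝ) * (m : ℝ))) *
    ((∑ e ∈ Om, ((U * Matrix.diagonal s * Bᵀ) e.1 e.2 - A e.1 e.2) ^ 2) +
      (1 / γ) * ∑ i, ∑ j, (U i j) ^ 2)

/-!
Row by row, the minimisation over `U` is a ridge regression: with `P = 1 + γ XᵀX` and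
`v = P⁻¹ y`, expanding the objective around `u = γ X v` leaves `y ⬝ v` plus two squares. For a
0/1 vector `s` the Gram matrix of the row design `X = diag(s) Bᵀ W_i` is `W_i (Σ_j s_j K_j) W_i`,
which gives the closed form `c(s)`; the outer minimum over the finite set `S_k^p` is attained.
Convexity of `c` comes from `y ⬝ P⁻¹ y = sup_u (2 u ⬝ y - u ⬝ P u)`, a supremum of affine
functions of `P`, composed with the affine map `s ↦ 1 + γ W_i (Σ_j s_j K_j) W_i`, which sends the
nonnegative orthant to positive definite matrices.
-/

namespace Matrix

variable {ι κ : Type*}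

lemma convex_setOf_posDef : Convex ℝ {P : Matrix ι ι ℝ | P.PosDef} :=
  convex_iff_forall_pos.2 fun _ hP _ hQ _ _ ha hb _ => (hP.smul ha).add (hQ.smul hb)

variable [DecidableEq ι]

lemma posDef_one_add_smul {γ : ℝ} (hγ : 0 ≤ γ) {M : Matrix ι ι ℝ} (hM : M.PosSemidef) :
    (1 + γ • M).PosDef :=
  PosDef.one.add_posSemidef (hM.smul hγ)

variable [Fintype ι] [Fintype κ]

lemma PosDef.mulVec_inv_mulVec {P : Matrix ι ι ℝ} (hP : P.PosDef) (y : ι → ℝ) :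
    P *ᵥ (P⁻¹ *ᵥ y) = y := by
  rw [mulVec_mulVec, mul_nonsing_inv _ ((isUnit_iff_isUnit_det _).1 hP.isUnit), one_mulVec]

lemma PosDef.two_mul_dotProduct_sub_le {P : Matrix ι ι ℝ} (hP : P.PosDef) (y u : ι → ℝ) :
    2 * (u ⬝ᵥ y) - u ⬝ᵥ (P *ᵥ u) ≤ y ⬝ᵥ (P⁻¹ *ᵥ y) := by
  set w := P⁻¹ *ᵥ y
  have hPw : P *ᵥ w = y := hP.mulVec_inv_mulVec y
  have hsymm : w ⬝ᵥ (P *ᵥ u) = u ⬝ᵥ y := by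
    rw [← hPw, ← dotProduct_transpose_mulVec, ← conjTranspose_eq_transpose_of_trivial,
      hP.isHermitian.eq]
  have hsq := hP.posSemidef.dotProduct_mulVec_nonneg (u - w)
  simp only [star_trivial, mulVec_sub, dotProduct_sub, sub_dotProduct, hPw, hsymm] at hsq
  rw [dotProduct_comm w y] at hsq
  linarith

lemma convexOn_dotProduct_inv_mulVec (y : ι → ℝ) :
    ConvexOn ℝ {P : Matrix ι ι ℝ | P.PosDef} fun P => y ⬝ᵥ (P⁻¹ *ᵥ y) := by
  refine ⟨convex_setOf_posDef, fun P hP Q hQ a b ha hb hab => ?_⟩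
  set v := (a • P + b • Q)⁻¹ *ᵥ y
  have hv : (a • P + b • Q) *ᵥ v = y :=
    (convex_setOf_posDef hP hQ ha hb hab : (a • P + b • Q).PosDef).mulVec_inv_mulVec y
  -- test the variational bound for `P` and for `Q` at the maximiser `v` for `a • P + b • Q`
  have hsplit : y ⬝ᵥ v = a * (2 * (v ⬝ᵥ y) - v ⬝ᵥ (P *ᵥ v))
      + b * (2 * (v ⬝ᵥ y) - v ⬝ᵥ (Q *ᵥ v)) := by
    have hvy : v ⬝ᵥ ((a • P + b • Q) *ᵥ v) = v ⬝ᵥ y := by rw [hv]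
    simp only [add_mulVec, smul_mulVec, dotProduct_add, dotProduct_smul, smul_eq_mul] at hvy
    rw [dotProduct_comm y v]
    linear_combination (-2 * (v ⬝ᵥ y)) * hab + hvy
  simp only [smul_eq_mul]
  rw [hsplit]
  exact add_le_add (mul_le_mul_of_nonneg_left (hP.two_mul_dotProduct_sub_le y v) ha)
    (mul_le_mul_of_nonneg_left (hQ.two_mul_dotProduct_sub_le y v) hb)

lemma ridge_objective_eq {γ : ℝ} (hγ : γ ≠ 0) (X : Matrix κ ι ℝ) {y v : ι → ℝ}
    (hv : (1 + γ • (Xᵀ * X)) *ᵥ v = y) (u : κ → ℝ) :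
    (u ᵥ* X - y) ⬝ᵥ (u ᵥ* X - y) + γ⁻¹ * (u ⬝ᵥ u) =
      y ⬝ᵥ v + ((u - γ • (X *ᵥ v)) ᵥ* X) ⬝ᵥ ((u - γ • (X *ᵥ v)) ᵥ* X) +
        γ⁻¹ * ((u - γ • (X *ᵥ v)) ⬝ᵥ (u - γ • (X *ᵥ v))) := by
  set e := u - γ • (X *ᵥ v)
  have hy : y = v + γ • ((X *ᵥ v) ᵥ* X) := by
    rw [← hv, add_mulVec, one_mulVec, smul_mulVec, ← mulVec_mulVec, mulVec_transpose]
  have hu : u = e + γ • (X *ᵥ v) := by simp [e]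
  have hcross : e ⬝ᵥ (X *ᵥ v) = (e ᵥ* X) ⬝ᵥ v := dotProduct_mulVec e X v
  have hgram : (X *ᵥ v) ⬝ᵥ (X *ᵥ v) = ((X *ᵥ v) ᵥ* X) ⬝ᵥ v := dotProduct_mulVec _ X v
  rw [hy, hu]
  simp only [add_vecMul, smul_vecMul, dotProduct_add, add_dotProduct, dotProduct_smul,
    smul_dotProduct, dotProduct_sub, sub_dotProduct, smul_eq_mul, hcross, hgram,
    dotProduct_comm (X *ᵥ v) e, dotProduct_comm v (e ᵥ* X), dotProduct_comm v ((X *ᵥ v) ᵥ* X),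
    dotProduct_comm ((X *ᵥ v) ᵥ* X) (e ᵥ* X)]
  field_simp
  ring

lemma isLeast_ridge {γ : ℝ} (hγ : 0 < γ) (X : Matrix κ ι ℝ) (y : ι → ℝ) :
    IsLeast (Set.range fun u : κ → ℝ => (u ᵥ* X - y) ⬝ᵥ (u ᵥ* X - y) + γ⁻¹ * (u ⬝ᵥ u))
      (y ⬝ᵥ ((1 + γ • (Xᵀ * X))⁻¹ *ᵥ y)) := by
  have hQ : (1 + γ • (Xᵀ * X)).PosDef := posDef_one_add_smul hγ.le <| by
    simpa using posSemidef_conjTranspose_mul_self X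
  have hv := hQ.mulVec_inv_mulVec y
  refine ⟨⟨γ • (X *ᵥ ((1 + γ • (Xᵀ * X))⁻¹ *ᵥ y)), ?_⟩, ?_⟩
  · dsimp only
    rw [ridge_objective_eq hγ.ne' X hv, sub_self, zero_vecMul, dotProduct_zero, dotProduct_zero,
      mul_zero, add_zero, add_zero]
  · rintro _ ⟨u, rfl⟩
    dsimp only
    rw [ridge_objective_eq hγ.ne' X hv, add_assoc]
    refine le_add_of_nonneg_right (add_nonneg ?_ (mul_nonneg (inv_nonneg.2 hγ.le) ?_)) <;>
      exact Finset.sum_nonneg fun _ _ => mul_self_nonneg _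

end Matrix

lemma ConvexOn.finset_sum {𝕜 E β ι : Type*} [Semiring 𝕜] [PartialOrder 𝕜] [AddCommMonoid E]
    [AddCommMonoid β] [PartialOrder β] [IsOrderedAddMonoid β] [SMul 𝕜 E] [Module 𝕜 β]
    {S : Set E} (hS : Convex 𝕜 S) (t : Finset ι) {f : ι → E → β}
    (hf : ∀ i ∈ t, ConvexOn 𝕜 S (f i)) : ConvexOn 𝕜 S fun x => ∑ i ∈ t, f i x := by
  have h := Finset.sum_induction f (ConvexOn 𝕜 S) (fun _ _ => ConvexOn.add) (convexOn_const 0 hS) hf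
  rwa [show ∑ i ∈ t, f i = fun x => ∑ i ∈ t, f i x from funext fun x => Finset.sum_apply x t f] at h

lemma isLeast_range_sum {ι α : Type*} [Fintype ι] {f : ι → α → ℝ} {c : ι → ℝ}
    (h : ∀ i, IsLeast (Set.range (f i)) (c i)) :
    IsLeast (Set.range fun x : ι → α => ∑ i, f i (x i)) (∑ i, c i) := by
  choose x hx using fun i => (h i).1
  exact ⟨⟨x, by simp only [hx]⟩, by
    rintro _ ⟨y, rfl⟩
    exact Finset.sum_le_sum fun i _ => (h i).2 ⟨y i, rfl⟩⟩

lemma isLeast_of_isLeast_fibers {α σ β : Type*} [LinearOrder β] {S : Set σ} {F : α → σ → β}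
    {c : σ → β} {s₀ : σ} (hF : ∀ s ∈ S, IsLeast (Set.range fun x => F x s) (c s))
    (hs₀ : s₀ ∈ S) (hmin : ∀ s ∈ S, c s₀ ≤ c s) :
    IsLeast {v | ∃ x s, s ∈ S ∧ v = F x s} (c s₀) := by
  obtain ⟨x₀, hx₀⟩ := (hF s₀ hs₀).1
  refine ⟨⟨x₀, s₀, hs₀, hx₀.symm⟩, ?_⟩
  rintro _ ⟨x, s, hs, rfl⟩
  exact (hmin s hs).trans ((hF s hs).2 ⟨x, rfl⟩)

lemma convexOn_dotProduct_inv_one_add_mulVec {ι E : Type*} [Fintype ι] [DecidableEq ι]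
    [AddCommGroup E] [Module ℝ E] (L : E →ₗ[ℝ] Matrix ι ι ℝ) {S : Set E} (hS : Convex ℝ S)
    (hL : ∀ s ∈ S, (L s).PosSemidef) (y : ι → ℝ) :
    ConvexOn ℝ S fun s => y ⬝ᵥ ((1 + L s)⁻¹ *ᵥ y) := by
  have h := (convexOn_dotProduct_inv_mulVec y).comp_affineMap
    (AffineMap.const ℝ E (1 : Matrix ι ι ℝ) + L.toAffineMap)
  refine h.subset (fun s hs => ?_) hS
  simpa using PosDef.one.add_posSemidef (hL s hs)

section MatrixCompletion

variable {n m p : ℕ}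

lemma sum_smul_Kmat (B : Matrix (Fin m) (Fin p) ℝ) (s : Fin p → ℝ) :
    ∑ j, s j • Kmat B j = B * diagonal s * Bᵀ := by
  ext a b
  rw [mul_apply]
  simp only [Matrix.sum_apply, Matrix.smul_apply, Kmat, vecMulVec_apply, smul_eq_mul,
    mul_diagonal, transpose_apply]
  exact Finset.sum_congr rfl fun j _ => by ring

lemma Wmat_transpose (Om : Finset (Fin n × Fin m)) (i : Fin n) : (Wmat Om i)ᵀ = Wmat Om i :=
  diagonal_transpose _

lemma posSemidef_Wmat_mul_sum_smul_Kmat_mul_Wmat (Om : Finset (Fin n × Fin m))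
    (B : Matrix (Fin m) (Fin p) ℝ) (i : Fin n) {s : Fin p → ℝ} (hs : 0 ≤ s) :
    (Wmat Om i * (∑ j, s j • Kmat B j) * Wmat Om i).PosSemidef := by
  rw [sum_smul_Kmat]
  have h := ((PosSemidef.diagonal hs).mul_mul_conjTranspose_same B).conjTranspose_mul_mul_same
    (Wmat Om i)
  simpa only [conjTranspose_eq_transpose_of_trivial, Wmat_transpose] using h

lemma Wmat_mul_sum_smul_Kmat_mul_Wmat (Om : Finset (Fin n × Fin m))
    (B : Matrix (Fin m) (Fin p) ℝ) (i : Fin n) {s : Fin p → ℝ} (hs : ∀ j, s j * s j = s j) :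
    Wmat Om i * (∑ j, s j • Kmat B j) * Wmat Om i =
      (diagonal s * Bᵀ * Wmat Om i)ᵀ * (diagonal s * Bᵀ * Wmat Om i) := by
  have hss : diagonal s * diagonal s = diagonal s := by
    rw [diagonal_mul_diagonal]; exact congrArg diagonal (funext hs)
  simp only [sum_smul_Kmat, transpose_mul, diagonal_transpose, transpose_transpose,
    Wmat_transpose, Matrix.mul_assoc]
  rw [← Matrix.mul_assoc (diagonal s) (diagonal s), hss]

lemma objFun_eq_sum_rows (γ : ℝ) (Om : Finset (Fin n × Fin m))
    (A : Matrix (Fin n) (Fin m) ℝ) (B : Matrix (Fin m) (Fin p) ℝ)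
    (U : Matrix (Fin n) (Fin p) ℝ) (s : Fin p → ℝ) :
    objFun γ Om A B U s = (1 / ((n : ℝ) * (m : ℝ))) * ∑ i,
      ((U i ᵥ* (diagonal s * Bᵀ * Wmat Om i) - abar Om A i) ⬝ᵥ
          (U i ᵥ* (diagonal s * Bᵀ * Wmat Om i) - abar Om A i) + γ⁻¹ * (U i ⬝ᵥ U i)) := by
  have hrow (i : Fin n) (j : Fin m) : (U i ᵥ* (diagonal s * Bᵀ * Wmat Om i)) j =
      (U * diagonal s * Bᵀ) i j * (if (i, j) ∈ Om then 1 else 0) := by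
    rw [← vecMul_vecMul, Wmat, vecMul_diagonal, ← mul_apply_eq_vecMul, Matrix.mul_assoc]
  rw [objFun, Finset.sum_add_distrib, ← Finset.mul_sum, one_div γ]
  congr 2
  · rw [← Finset.sum_ite_mem_eq, Fintype.sum_prod_type]
    refine Finset.sum_congr rfl fun i _ => Finset.sum_congr rfl fun j _ => ?_
    by_cases h : (i, j) ∈ Om <;> simp [hrow, abar, h, sq]
  · simp only [dotProduct, sq]

lemma isLeast_objFun {γ : ℝ} (hγ : 0 < γ) (Om : Finset (Fin n × Fin m))
    (A : Matrix (Fin n) (Fin m) ℝ) (B : Matrix (Fin m) (Fin p) ℝ) {s : Fin p → ℝ}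
    (hs : ∀ j, s j * s j = s j) :
    IsLeast (Set.range fun U => objFun γ Om A B U s) (cfun γ Om A B s) := by
  simp only [objFun_eq_sum_rows, cfun, Wmat_mul_sum_smul_Kmat_mul_Wmat Om B _ hs]
  have hrows := isLeast_range_sum fun i =>
    isLeast_ridge hγ (diagonal s * Bᵀ * Wmat Om i) (abar Om A i)
  have hscale : Monotone fun t : ℝ => 1 / ((n : ℝ) * (m : ℝ)) * t :=
    monotone_mul_left_of_nonneg (by positivity)
  have h := hscale.map_isLeast hrows
  rwa [← Set.range_comp] at h

lemma convexOn_cfun {γ : ℝ} (hγ : 0 ≤ γ) (Om : Finset (Fin n × Fin m))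
    (A : Matrix (Fin n) (Fin m) ℝ) (B : Matrix (Fin m) (Fin p) ℝ) :
    ConvexOn ℝ {s : Fin p → ℝ | ∀ j, 0 ≤ s j} (cfun γ Om A B) := by
  have hrow (i : Fin n) := convexOn_dotProduct_inv_one_add_mulVec
    (γ • (LinearMap.mulRight ℝ (Wmat Om i) ∘ₗ LinearMap.mulLeft ℝ (Wmat Om i) ∘ₗ
      Fintype.linearCombination ℝ (Kmat B)))
    (convex_Ici 0)
    (fun s hs => (posSemidef_Wmat_mul_sum_smul_Kmat_mul_Wmat Om B i hs).smul hγ) (abar Om A i)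
  exact (ConvexOn.finset_sum (convex_Ici 0) Finset.univ fun i _ => hrow i).smul
    (by positivity : (0 : ℝ) ≤ 1 / ((n : ℝ) * (m : ℝ)))

end MatrixCompletion

lemma mul_self_eq_of_mem_skpSet {p k : ℕ} {s : Fin p → ℝ} (hs : s ∈ SkpSet p k) (j : Fin p) :
    s j * s j = s j := by
  rcases hs.1 j with h | h <;> simp [h]

lemma skpSet_finite (p k : ℕ) : (SkpSet p k).Finite := by
  refine (Set.finite_range fun b : Fin p → Bool => fun j => if b j then (1 : ℝ) else 0).subset ?_
  intro s hs
  refine ⟨fun j => s j = 1, funext fun j => ?_⟩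
  rcases hs.1 j with h | h <;> simp [h]

lemma skpSet_nonempty {p k : ℕ} (hkp : k ≤ p) : (SkpSet p k).Nonempty := by
  let t := Finset.univ.map (Fin.castLEEmb hkp)
  refine ⟨fun j => if j ∈ t then 1 else 0, fun j => by by_cases h : j ∈ t <;> simp [h], ?_⟩
  simp [Finset.sum_boole, t, Finset.card_image_of_injective _ (Fin.castLE_injective hkp)]

theorem stmt0_general {n m p k : ℕ} (hkp : k ≤ p)
    (γ : ℝ) (hγ : 0 < γ) (Om : Finset (Fin n × Fin m))
    (A : Matrix (Fin n) (Fin m) ℝ) (B : Matrix (Fin m) (Fin p) ℝ) :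
    (∀ s ∈ SkpSet p k,
      IsLeast {v | ∃ U : Matrix (Fin n) (Fin p) ℝ, v = objFun γ Om A B U s}
        (cfun γ Om A B s)) ∧
    (∃ s₀ ∈ SkpSet p k,
      (∀ s ∈ SkpSet p k, cfun γ Om A B s₀ ≤ cfun γ Om A B s) ∧
      IsLeast {v | ∃ (U : Matrix (Fin n) (Fin p) ℝ) (s : Fin p → ℝ),
          s ∈ SkpSet p k ∧ v = objFun γ Om A B U s}
        (cfun γ Om A B s₀)) ∧
    ConvexOn ℝ {s : Fin p → ℝ | ∀ j, 0 ≤ s j} (cfun γ Om A B) := by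
  have hinner (s) (hs : s ∈ SkpSet p k) :=
    isLeast_objFun hγ Om A B (mul_self_eq_of_mem_skpSet hs)
  obtain ⟨s₀, hs₀, hmin⟩ :=
    Set.exists_min_image _ (cfun γ Om A B) (skpSet_finite p k) (skpSet_nonempty hkp)
  refine ⟨fun s hs => ?_, ⟨s₀, hs₀, hmin, isLeast_of_isLeast_fibers hinner hs₀ hmin⟩,
    convexOn_cfun hγ.le Om A B⟩
  simpa only [Set.range, eq_comm] using hinner s hs

/-- For every `s ∈ S_k^p` the inner minimization over `U` attains its minimum with value
`c(s)`; consequently the full problem attains its minimum and its optimal value equals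
`min_{s ∈ S_k^p} c(s)`.  Moreover `c` is convex (on the nonnegative orthant). -/
theorem stmt0 {n m p k : ℕ} (hn : 0 < n) (hm : 0 < m) (hk : 0 < k) (hkp : k ≤ p)
    (γ : ℝ) (hγ : 0 < γ) (Om : Finset (Fin n × Fin m))
    (A : Matrix (Fin n) (Fin m) ℝ) (B : Matrix (Fin m) (Fin p) ℝ) :
    (∀ s ∈ SkpSet p k,
      IsLeast {v | ∃ U : Matrix (Fin n) (Fin p) ℝ, v = objFun γ Om A B U s}
        (cfun γ Om A B s)) ∧
    (∃ s₀ ∈ SkpSet p k,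
      (∀ s ∈ SkpSet p k, cfun γ Om A B s₀ ≤ cfun γ Om A B s) ∧
      IsLeast {v | ∃ (U : Matrix (Fin n) (Fin p) ℝ) (s : Fin p → ℝ),
          s ∈ SkpSet p k ∧ v = objFun γ Om A B U s}
        (cfun γ Om A B s₀)) ∧
    ConvexOn ℝ {s : Fin p → ℝ | ∀ j, 0 ≤ s j} (cfun γ Om A B) :=
  stmt0_general hkp γ hγ Om A B
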